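/- Let S be a finite nonempty set of points in ℝ^m, p ∈ ℝ^m, and suppose p' ∈ conv(S) is a witness, i.e., d(p', v) < d(p, v) for all v ∈ S (so in particular p ≠ p'). Then the hyperplane orthogonally bisecting the segment pp' strictly separates p from conv(S): for every x ∈ conv(S) one has ⟨p' − p, x − (p + p')/2⟩ > 0, while ⟨p' − p, p − (p + p')/2⟩ < 0. -/

import Mathlib

open RealInnerProductSpace

/-! The bisector inequality `⟪p' - p, x - (p + p')/2⟫ > 0` says exactly that `x` is strictly
closer to `p'` than to `p`. Points strictly closer to `p'` than to `p` form an open half-space,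
which is convex, so the witness property passes from `S` to `conv(S)`; applied to `x = p'` it gives
`p ≠ p'`, whence the strict inequality at `p`. -/

section

variable {E : Type*} [NormedAddCommGroup E] [InnerProductSpace ℝ E]

theorem inner_sub_sub_midpoint_eq (x y v : E) :
    ⟪y - x, v - (2 : ℝ)⁻¹ • (x + y)⟫ = (dist x v ^ 2 - dist y v ^ 2) / 2 := by
  simp only [dist_eq_norm, @norm_sub_sq_real, inner_sub_left, inner_sub_right, inner_smul_right,
    inner_add_right, real_inner_self_eq_norm_sq, real_inner_comm x y, real_inner_comm v x,
    real_inner_comm v y]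
  ring

theorem inner_sub_sub_midpoint_pos_iff (x y v : E) :
    0 < ⟪y - x, v - (2 : ℝ)⁻¹ • (x + y)⟫ ↔ dist y v < dist x v := by
  rw [inner_sub_sub_midpoint_eq, div_pos_iff_of_pos_right two_pos, sub_pos,
    pow_lt_pow_iff_left₀ dist_nonneg dist_nonneg two_ne_zero]

theorem convex_setOf_dist_lt_dist (x y : E) : Convex ℝ {v | dist y v < dist x v} := by
  have hhalfSpace :
      {v | dist y v < dist x v} = {v | ⟪y - x, (2 : ℝ)⁻¹ • (x + y)⟫ < ⟪y - x, v⟫} := by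
    ext v
    rw [Set.mem_ofPred_eq, Set.mem_ofPred_eq, ← inner_sub_sub_midpoint_pos_iff, inner_sub_right,
      sub_pos]
  rw [hhalfSpace]
  exact convex_halfSpace_gt (innerₛₗ ℝ (y - x)).isLinear _

theorem dist_lt_dist_of_mem_convexHull {s : Set E} {x y z : E}
    (h : ∀ v ∈ s, dist y v < dist x v) (hz : z ∈ convexHull ℝ s) : dist y z < dist x z :=
  convexHull_min h (convex_setOf_dist_lt_dist x y) hz

end

theorem witness_bisector_separates_general {m : ℕ} (S : Finset (EuclideanSpace ℝ (Fin m)))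
    (p p' : EuclideanSpace ℝ (Fin m))
    (hp' : p' ∈ convexHull ℝ (S : Set (EuclideanSpace ℝ (Fin m))))
    (hwit : ∀ v ∈ S, dist p' v < dist p v) :
    (∀ x ∈ convexHull ℝ (S : Set (EuclideanSpace ℝ (Fin m))),
        (0 : ℝ) < ⟪p' - p, x - (2 : ℝ)⁻¹ • (p + p')⟫) ∧
      ⟪p' - p, p - (2 : ℝ)⁻¹ • (p + p')⟫ < (0 : ℝ) := by
  have hcloser : ∀ x ∈ convexHull ℝ (S : Set (EuclideanSpace ℝ (Fin m))), dist p' x < dist p x :=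
    fun x hx => dist_lt_dist_of_mem_convexHull hwit hx
  refine ⟨fun x hx => (inner_sub_sub_midpoint_pos_iff p p' x).2 (hcloser x hx), ?_⟩
  have hne : 0 < dist p p' := by simpa using hcloser p' hp'
  rw [inner_sub_sub_midpoint_eq, dist_self, dist_comm]
  have := pow_pos hne 2
  linarith

/-- If `p' ∈ conv(S)` is a witness, the hyperplane orthogonally bisecting the
segment `p p'` strictly separates `p` from `conv(S)`: every `x ∈ conv(S)` satisfies
`⟨p' - p, x - (p + p')/2⟩ > 0`, while `⟨p' - p, p - (p + p')/2⟩ < 0`. -/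
theorem witness_bisector_separates {m : ℕ} (S : Finset (EuclideanSpace ℝ (Fin m)))
    (hS : S.Nonempty) (p p' : EuclideanSpace ℝ (Fin m))
    (hp' : p' ∈ convexHull ℝ (S : Set (EuclideanSpace ℝ (Fin m))))
    (hwit : ∀ v ∈ S, dist p' v < dist p v) :
    (∀ x ∈ convexHull ℝ (S : Set (EuclideanSpace ℝ (Fin m))),
        (0 : ℝ) < ⟪p' - p, x - (2 : ℝ)⁻¹ • (p + p')⟫) ∧
      ⟪p' - p, p - (2 : ℝ)⁻¹ • (p + p')⟫ < (0 : ℝ) :=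
  witness_bisector_separates_general S p p' hp' hwit
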